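/- Let N and N' be positive integers and a, b, d complex numbers (such that no denominator parameter is a nonpositive integer within the range of summation). Then the doubly terminating sum Σ_{m=0}^{N} Σ_{n=0}^{N'} (a)_m(b)_m(-N)_m (d-a)_n(d-b)_n(-N')_n / ((d)_{m+n}(1+a+b-N-d)_m(1-a-b-N'+d)_n m! n!) = (d-a)_N (d-b)_N (a)_{N'} (b)_{N'} / ((d)_{N+N'} (d-a-b)_N (a+b-d)_{N'}). -/

import Mathlib

open Complex Finset

/-- Pochhammer symbol `(a)_k = a(a+1)⋯(a+k-1)`. -/
noncomputable def poch (a : ℂ) (k : ℕ) : ℂ := ∏ i ∈ Finset.range k, (a + i)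

/-- `z` is not a nonpositive integer. -/
def notNonposInt (z : ℂ) : Prop := ∀ k : ℕ, z ≠ -(k : ℂ)

lemma poch_zero (a : ℂ) : poch a 0 = 1 := by simp [poch]

lemma poch_succ (a : ℂ) (k : ℕ) : poch a (k + 1) = poch a k * (a + k) :=
  Finset.prod_range_succ _ _

lemma poch_one (a : ℂ) : poch a 1 = a := by simp [poch]

lemma poch_add (a : ℂ) (j k : ℕ) : poch a (j + k) = poch a j * poch (a + j) k := by
  unfold poch
  rw [Finset.prod_range_add]
  congr 1
  refine Finset.prod_congr rfl fun i _ => ?_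
  push_cast; ring

lemma poch_succ' (a : ℂ) (k : ℕ) : poch a (k + 1) = a * poch (a + 1) k := by
  have := poch_add a 1 k
  rw [add_comm 1 k] at this
  simpa [poch_one] using this

/-- Vandermonde: `(x+y)_M = Σ_j C(M,j) (x)_j (y)_{M-j}`. -/
lemma vander (M : ℕ) (x y : ℂ) :
    poch (x + y) M = ∑ j ∈ Finset.range (M + 1),
      (M.choose j : ℂ) * poch x j * poch y (M - j) := by
  induction M with
  | zero => simp [poch_zero]
  | succ M ih =>
    have key : ∑ j ∈ Finset.range (M + 2),
        ((M+1).choose j : ℂ) * poch x j * poch y (M + 1 - j)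
        = ∑ j ∈ Finset.range (M + 1),
            (M.choose j : ℂ) * poch x (j+1) * poch y (M - j)
          + ∑ j ∈ Finset.range (M + 1),
            (M.choose j : ℂ) * poch x j * poch y (M + 1 - j) := by
      rw [Finset.sum_range_succ'
        (fun j => ((M+1).choose j : ℂ) * poch x j * poch y (M + 1 - j))]
      have h1 : ∀ j ∈ Finset.range (M + 1),
          ((M+1).choose (j+1) : ℂ) * poch x (j+1) * poch y (M + 1 - (j+1))
          = (M.choose j : ℂ) * poch x (j+1) * poch y (M - j)
            + (M.choose (j+1) : ℂ) * poch x (j+1) * poch y (M + 1 - (j+1)) := by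
        intro j hj
        have : M + 1 - (j + 1) = M - j := by omega
        rw [this, Nat.choose_succ_succ]
        push_cast
        ring
      rw [Finset.sum_congr rfl h1, Finset.sum_add_distrib, add_assoc]
      congr 1
      have h0 : ((M+1).choose 0 : ℂ) * poch x 0 * poch y (M + 1 - 0)
          = (M.choose 0 : ℂ) * poch x 0 * poch y (M + 1 - 0) := by
        simp
      rw [h0, ← Finset.sum_range_succ'
        (fun j => (M.choose j : ℂ) * poch x j * poch y (M + 1 - j)),
        Finset.sum_range_succ]
      simp [Nat.choose_succ_self]
    rw [key]
    have h2 : ∀ j ∈ Finset.range (M + 1),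
        (M.choose j : ℂ) * poch x (j+1) * poch y (M - j)
          + (M.choose j : ℂ) * poch x j * poch y (M + 1 - j)
        = ((M.choose j : ℂ) * poch x j * poch y (M - j)) * (x + y + M) := by
      intro j hj
      rw [Finset.mem_range, Nat.lt_succ_iff] at hj
      have e1 : M + 1 - j = (M - j) + 1 := by omega
      rw [e1, poch_succ x j, poch_succ y (M - j)]
      have e2 : ((M - j : ℕ) : ℂ) = (M : ℂ) - j := by
        rw [Nat.cast_sub hj]
      rw [e2]
      ring
    rw [← Finset.sum_add_distrib, Finset.sum_congr rfl h2, ← Finset.sum_mul, ← ih,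
      poch_succ]

lemma saal (M : ℕ) (A B C : ℂ) :
    ∑ k ∈ Finset.range (M + 1), (M.choose k : ℂ) * poch A k * poch B k
      * poch (C - A - B) (M - k) * poch (C + k) (M - k)
    = poch (C - A) M * poch (C - B) M := by
  induction M with
  | zero => simp [poch_zero]
  | succ M ih =>
    set F : ℕ → ℂ := fun k => (M.choose k : ℂ) * poch A k * poch B k
      * poch (C - A - B) (M - k) * poch (C + k) (M - k) with hF
    set G : ℕ → ℂ := fun k => Nat.casesOn k 0 (fun j => -((M.choose j : ℂ) * poch A (j+1)
      * poch B (j+1) * poch (C - A - B) (M - j) * poch (C + j) (M - j))) with hG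
    have key : ∀ k ∈ Finset.range (M + 2),
        ((M+1).choose k : ℂ) * poch A k * poch B k
          * poch (C - A - B) (M + 1 - k) * poch (C + k) (M + 1 - k)
        = (C - A + M) * (C - B + M) * F k + (G (k+1) - G k) := by
      intro k hk
      rw [Finset.mem_range] at hk
      match k with
      | 0 =>
        have hG1 : G (0+1) = -((M.choose 0 : ℂ) * poch A (0+1) * poch B (0+1)
            * poch (C - A - B) (M - 0) * poch (C + ((0:ℕ):ℂ)) (M - 0)) := rfl
        have hG0 : G 0 = 0 := rfl
        rw [hG1, hG0]
        simp only [hF, Nat.choose_zero_right, Nat.cast_one, Nat.cast_zero,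
          add_zero, Nat.sub_zero]
        rw [poch_succ (C - A - B) M, poch_succ C M, poch_succ A 0, poch_succ B 0, poch_zero]
        push_cast
        ring
      | (j+1) =>
        rcases Nat.lt_or_ge (j+1) (M+1) with hlt | hge
        · -- j + 1 ≤ M
          have hjM : j + 1 ≤ M := by omega
          obtain ⟨r, hr⟩ : ∃ r, M = (j+1) + r := ⟨M - (j+1), by omega⟩
          have e1 : M + 1 - (j+1) = r + 1 := by omega
          have e2 : M - (j+1) = r := by omega
          have e3 : M - j = r + 1 := by omega
          simp only [hF, hG, e1, e2, e3]
          rw [Nat.choose_succ_succ' M j]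
          -- poch splits
          rw [poch_succ (C - A - B) r]
          have e4 : poch (C + (j+1 : ℕ)) (r + 1) = poch (C + (j+1 : ℕ)) r * (C + M) := by
            rw [poch_succ]
            have : (C + ((j+1 : ℕ) : ℂ) + (r : ℂ)) = C + M := by
              rw [hr]; push_cast; ring
            rw [this]
          rw [e4]
          have e5 : poch A (j+1+1) = poch A (j+1) * (A + (j+1 : ℕ)) := poch_succ _ _
          have e6 : poch B (j+1+1) = poch B (j+1) * (B + (j+1 : ℕ)) := poch_succ _ _
          rw [e5, e6]
          have e7 : poch (C + (j : ℕ)) (r+1) = (C + (j : ℕ)) * poch (C + (j+1 : ℕ)) r := by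
            rw [poch_succ']
            congr 2
            push_cast; ring
          rw [e7]
          -- binomial identity: (j+1) * C(M,j+1) = (r+1) * C(M,j)
          have hbin : ((j:ℂ)+1) * (M.choose (j+1) : ℂ) = ((r:ℂ)+1) * (M.choose j : ℂ) := by
            have h1 : (j+1) * M.choose (j+1) = (r+1) * M.choose j := by
              have hcse := Nat.choose_succ_right_eq M j
              rw [e3] at hcse
              exact (mul_comm _ _).trans (hcse.trans (mul_comm _ _))
            exact_mod_cast congrArg (Nat.cast (R := ℂ)) h1
          have hMc : (M : ℂ) = (j : ℂ) + 1 + r := by rw [hr]; push_cast; ring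
          set q := poch (C + ((j + 1 : ℕ) : ℂ)) r with hq
          set pA := poch A (j+1) with hpA
          set pB := poch B (j+1) with hpB
          set pD := poch (C - A - B) r with hpD
          rw [hMc]
          push_cast
          linear_combination (-(pA * pB * pD * q * (C - A - B + (r:ℂ)))) * hbin
        · -- k = M + 1
          have hjeq : j = M := by omega
          have hGs : G (j+1) = -((M.choose j : ℂ) * poch A (j+1)
              * poch B (j+1) * poch (C - A - B) (M - j) * poch (C + ((j:ℕ):ℂ)) (M - j)) := rfl
          have hGss : G (j+1+1) = -((M.choose (j+1) : ℂ) * poch A (j+1+1)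
              * poch B (j+1+1) * poch (C - A - B) (M - (j+1))
              * poch (C + (((j+1):ℕ):ℂ)) (M - (j+1))) := rfl
          have h0 : M - j = 0 := by omega
          have h00 : M - (j+1) = 0 := by omega
          have e1 : M + 1 - (j+1) = 0 := by omega
          have hc1 : M.choose j = 1 := by rw [hjeq, Nat.choose_self]
          have hcg : (M+1).choose (j+1) = 1 := by rw [hjeq]; exact Nat.choose_self (M+1)
          have hc0 : M.choose (j+1) = 0 := Nat.choose_eq_zero_of_lt (by omega)
          rw [hGs, hGss]
          simp only [hF, h0, h00, e1, hc1, hcg, hc0, Nat.cast_one, Nat.cast_zero, poch_zero]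
          ring
    rw [Finset.sum_congr rfl key, Finset.sum_add_distrib, ← Finset.mul_sum,
      Finset.sum_range_sub G]
    have hG0 : G 0 = 0 := rfl
    have hGtop : G (M + 2) = 0 := by
      simp only [hG]
      simp [Nat.choose_succ_self]
    rw [hG0, hGtop]
    have hFsum : ∑ k ∈ Finset.range (M + 2), F k = poch (C - A) M * poch (C - B) M := by
      rw [Finset.sum_range_succ]
      have : F (M+1) = 0 := by
        simp [hF, Nat.choose_succ_self]
      rw [this, add_zero, ← ih]
    rw [hFsum, poch_succ (C-A) M, poch_succ (C-B) M]
    ring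

lemma step1 (M m : ℕ) (a b d : ℂ) :
    ∑ n ∈ Finset.range (M + 1), (M.choose n : ℂ) * poch (d - a) n * poch (d - b) n
      * poch (a + b - d) (M - n) * poch (d + m + n) (M - n)
    = ∑ i ∈ Finset.range (M + 1), (M.choose i : ℂ) * poch (a + m) i * poch (b + m) i
      * poch (-(m:ℂ)) (M - i) * poch (d + m + i) (M - i) := by
  -- substitute saalschütz for poch (d-a) n * poch (d-b) n
  have hsub : ∀ n : ℕ, poch (d - a) n * poch (d - b) n
      = ∑ i ∈ Finset.range (n + 1), (n.choose i : ℂ) * poch (a + m) i * poch (b + m) i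
        * poch (d - a - b - m) (n - i) * poch (d + m + i) (n - i) := by
    intro n
    have h := saal n (a + m) (b + m) (d + m)
    have e1 : d + (m:ℂ) - (a + m) = d - a := by ring
    have e2 : d + (m:ℂ) - (b + m) = d - b := by ring
    have e3 : d + (m:ℂ) - (a + m) - (b + m) = d - a - b - m := by ring
    rw [e3, e1, e2] at h
    exact h.symm
  calc
    ∑ n ∈ Finset.range (M + 1), (M.choose n : ℂ) * poch (d - a) n * poch (d - b) n
        * poch (a + b - d) (M - n) * poch (d + m + n) (M - n)
      = ∑ n ∈ Finset.range (M + 1), ∑ i ∈ Finset.range (M + 1),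
          (M.choose n : ℂ) * ((n.choose i : ℂ) * poch (a + m) i * poch (b + m) i
            * poch (d - a - b - m) (n - i) * poch (d + m + i) (n - i))
          * poch (a + b - d) (M - n) * poch (d + m + n) (M - n) := by
        refine Finset.sum_congr rfl fun n hn => ?_
        rw [Finset.mem_range, Nat.lt_succ_iff] at hn
        -- first rewrite the product, then extend the inner range from n+1 to M+1
        have : (M.choose n : ℂ) * poch (d - a) n * poch (d - b) n
            * poch (a + b - d) (M - n) * poch (d + m + n) (M - n)
            = ∑ i ∈ Finset.range (n + 1),
              (M.choose n : ℂ) * ((n.choose i : ℂ) * poch (a + m) i * poch (b + m) i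
                * poch (d - a - b - m) (n - i) * poch (d + m + i) (n - i))
              * poch (a + b - d) (M - n) * poch (d + m + n) (M - n) := by
          rw [show (M.choose n : ℂ) * poch (d - a) n * poch (d - b) n
              * poch (a + b - d) (M - n) * poch (d + m + n) (M - n)
              = (poch (d - a) n * poch (d - b) n) * ((M.choose n : ℂ)
                * poch (a + b - d) (M - n) * poch (d + m + n) (M - n)) from by ring,
            hsub n, Finset.sum_mul]
          refine Finset.sum_congr rfl fun i _ => ?_
          ring
        rw [this]
        refine Finset.sum_subset (by intro x hx; rw [Finset.mem_range] at *; omega) ?_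
        intro i hi hni
        rw [Finset.mem_range] at hi hni
        have : n.choose i = 0 := Nat.choose_eq_zero_of_lt (by omega)
        rw [this]
        push_cast
        ring
    _ = ∑ i ∈ Finset.range (M + 1), ∑ n ∈ Finset.range (M + 1),
          (M.choose n : ℂ) * ((n.choose i : ℂ) * poch (a + m) i * poch (b + m) i
            * poch (d - a - b - m) (n - i) * poch (d + m + i) (n - i))
          * poch (a + b - d) (M - n) * poch (d + m + n) (M - n) := Finset.sum_comm
    _ = ∑ i ∈ Finset.range (M + 1), (M.choose i : ℂ) * poch (a + m) i * poch (b + m) i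
        * poch (-(m:ℂ)) (M - i) * poch (d + m + i) (M - i) := by
        refine Finset.sum_congr rfl fun i hi => ?_
        rw [Finset.mem_range, Nat.lt_succ_iff] at hi
        -- inner sum over n: only n ≥ i contribute
        have hzero : ∀ n ∈ Finset.range (M + 1), n ∉ Finset.Ico i (M + 1) →
            (M.choose n : ℂ) * ((n.choose i : ℂ) * poch (a + m) i * poch (b + m) i
              * poch (d - a - b - m) (n - i) * poch (d + m + i) (n - i))
            * poch (a + b - d) (M - n) * poch (d + m + n) (M - n) = 0 := by
          intro n hn hni
          rw [Finset.mem_range] at hn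
          rw [Finset.mem_Ico] at hni
          have : n < i := by omega
          rw [Nat.choose_eq_zero_of_lt this]
          push_cast; ring
        rw [← Finset.sum_subset (Finset.Ico_subset_Ico_left (Nat.zero_le i) |>.trans
            (by rw [← Finset.range_eq_Ico])) (fun n hn hni => hzero n hn hni)]
        rw [Finset.sum_Ico_eq_sum_range]
        have hMi : M + 1 - i = (M - i) + 1 := by omega
        rw [hMi]
        have hv := vander (M - i) (d - a - b - (m:ℂ)) (a + b - d)
        rw [show d - a - b - (m:ℂ) + (a + b - d) = -(m:ℂ) from by ring] at hv
        have key : ∀ s ∈ Finset.range ((M - i) + 1),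
            (M.choose (i + s) : ℂ) * (((i+s).choose i : ℂ) * poch (a + m) i * poch (b + m) i
              * poch (d - a - b - m) ((i+s) - i) * poch (d + m + i) ((i+s) - i))
            * poch (a + b - d) (M - (i+s)) * poch (d + m + ((i + s : ℕ) : ℂ)) (M - (i+s))
            = ((M.choose i : ℂ) * poch (a + m) i * poch (b + m) i * poch (d + m + i) (M - i))
              * (((M-i).choose s : ℂ) * poch (d - a - b - (m:ℂ)) s
                * poch (a + b - d) ((M - i) - s)) := by
          intro s hs
          rw [Finset.mem_range, Nat.lt_succ_iff] at hs
          have eis : (i + s) - i = s := Nat.add_sub_cancel_left i s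
          have eMs : M - (i + s) = (M - i) - s := by omega
          have hch : (M.choose (i+s) : ℂ) * ((i+s).choose i : ℂ)
              = (M.choose i : ℂ) * ((M-i).choose s : ℂ) := by
            have h1 : M.choose (i+s) * (i+s).choose i = M.choose i * (M-i).choose s := by
              have := Nat.choose_mul (n := M) (show i ≤ i + s by omega)
              simpa [Nat.add_sub_cancel_left] using this
            exact_mod_cast congrArg (Nat.cast (R := ℂ)) h1
          have hsplit : poch (d + m + i) (M - i)
              = poch (d + m + i) s * poch (d + m + ((i + s : ℕ) : ℂ)) ((M - i) - s) := by
            have h := poch_add (d + m + (i:ℂ)) s ((M - i) - s)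
            rw [show s + ((M - i) - s) = M - i from by omega] at h
            rw [h]
            congr 2
            push_cast; ring
          rw [eis, eMs, hsplit]
          linear_combination (poch (a + m) i * poch (b + m) i * poch (d - a - b - (m:ℂ)) s
            * poch (d + m + i) s * poch (d + m + ((i + s : ℕ) : ℂ)) ((M - i) - s)
            * poch (a + b - d) ((M - i) - s)) * hch
        rw [Finset.sum_congr rfl key, ← Finset.mul_sum, ← hv]
        ring

lemma poch_neg_nat_eq_zero {m j : ℕ} (h : m < j) : poch (-(m:ℂ)) j = 0 :=
  Finset.prod_eq_zero (Finset.mem_range.mpr h) (by simp)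

lemma poch_neg_nat {m j : ℕ} (h : j ≤ m) :
    poch (-(m:ℂ)) j = (-1)^j * (m.descFactorial j : ℂ) := by
  induction j with
  | zero => simp [poch_zero]
  | succ j ih =>
    rw [poch_succ, ih (by omega), Nat.descFactorial_succ]
    have : ((m - j : ℕ) : ℂ) = (m:ℂ) - j := by rw [Nat.cast_sub (by omega)]
    push_cast [this]
    ring

noncomputable def Eterm (N N' : ℕ) (a b d : ℂ) (m j : ℕ) : ℂ :=
  (N.choose m : ℂ) * (N'.choose j : ℂ) * poch a m * poch b m
    * poch (a + m) (N' - j) * poch (b + m) (N' - j) * poch (d - a - b) (N - m)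
    * poch (-(m:ℂ)) j * poch (d + m + ((N' - j : ℕ) : ℂ)) (j + (N - m))

noncomputable def Fterm (N N' : ℕ) (a b d : ℂ) (p j : ℕ) : ℂ :=
  (N.choose p : ℂ) * ((N - p).choose j : ℂ) * poch (-(N' : ℂ)) j * poch a (N' + p)
    * poch b (N' + p) * poch (d - a - b) ((N - p) - j) * poch (d + N' + p) (N - p)

lemma Eterm_eq_Fterm (N N' : ℕ) (a b d : ℂ) (j p : ℕ) (hjp : j + p ≤ N) :
    Eterm N N' a b d (j + p) j = Fterm N N' a b d p j := by
  rcases Nat.lt_or_ge N' j with h | h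
  · -- both zero
    rw [Eterm, Fterm, Nat.choose_eq_zero_of_lt h, poch_neg_nat_eq_zero h]
    push_cast; ring
  · rw [Eterm, Fterm]
    -- merge poch a (j+p) * poch (a + (j+p)) (N'-j) = poch a (N'+p)
    have merge : ∀ x : ℂ, poch x (j + p) * poch (x + ((j + p : ℕ) : ℂ)) (N' - j)
        = poch x (N' + p) := by
      intro x
      have hp := poch_add x (j + p) (N' - j)
      rw [show (j + p) + (N' - j) = N' + p from by omega] at hp
      rw [← hp]
    have e1 : N - (j + p) = (N - p) - j := by omega
    have e2 : j + (N - (j + p)) = N - p := by omega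
    have e3 : d + ((j + p : ℕ) : ℂ) + ((N' - j : ℕ) : ℂ) = d + (N' : ℂ) + p := by
      have h1 : ((N' - j : ℕ) : ℂ) = (N' : ℂ) - j := by rw [Nat.cast_sub h]
      rw [h1]; push_cast; ring
    rw [← merge a, ← merge b, e2, e1, e3]
    -- pochhammers of negative integers
    rw [poch_neg_nat (show j ≤ j + p by omega), poch_neg_nat h]
    -- binomial identity
    have hbin : (N.choose (j + p)) * ((j+p).descFactorial j) * (N'.choose j)
        = (N.choose p) * ((N - p).choose j) * (N'.descFactorial j) := by
      rw [Nat.descFactorial_eq_factorial_mul_choose (j+p) j,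
        Nat.descFactorial_eq_factorial_mul_choose N' j]
      have h1 : (j + p).choose j = (j + p).choose p := by
        rw [Nat.choose_symm_add]
      have h2 : N.choose (j + p) * (j + p).choose p
          = N.choose p * (N - p).choose j := by
        have := Nat.choose_mul (n := N) (show p ≤ p + j by omega)
        rw [show p + j = j + p from by omega] at this
        rw [this, show j + p - p = j from by omega]
      calc N.choose (j + p) * (Nat.factorial j * (j + p).choose j) * N'.choose j
          = (N.choose (j + p) * (j + p).choose p) * Nat.factorial j * N'.choose j := by
            rw [h1]; ring
        _ = N.choose p * (N - p).choose j * (Nat.factorial j * N'.choose j) := by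
            rw [h2]; ring
    have hbinC : ((N.choose (j + p)) : ℂ) * ((j+p).descFactorial j : ℂ) * ((N'.choose j) : ℂ)
        = ((N.choose p) : ℂ) * (((N - p).choose j) : ℂ) * ((N'.descFactorial j) : ℂ) := by
      exact_mod_cast congrArg (Nat.cast (R := ℂ)) hbin
    linear_combination ((-1:ℂ))^j * poch a (j + p) * poch (a + ((j + p : ℕ) : ℂ)) (N' - j)
      * poch b (j + p) * poch (b + ((j + p : ℕ) : ℂ)) (N' - j)
      * poch (d - a - b) ((N - p) - j) * poch (d + (N':ℂ) + p) (N - p) * hbinC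

lemma Eterm_zero_of_lt (N N' : ℕ) (a b d : ℂ) {m j : ℕ} (h : m < j) :
    Eterm N N' a b d m j = 0 := by
  rw [Eterm, poch_neg_nat_eq_zero h]; ring

lemma Fterm_zero_of_lt (N N' : ℕ) (a b d : ℂ) {p j : ℕ} (h : N - p < j) :
    Fterm N N' a b d p j = 0 := by
  rw [Fterm, Nat.choose_eq_zero_of_lt h]; push_cast; ring

lemma claimD (N N' : ℕ) (a b d : ℂ) (j : ℕ) :
    ∑ m ∈ Finset.range (N + 1), Eterm N N' a b d m j
    = ∑ p ∈ Finset.range (N + 1), Fterm N N' a b d p j := by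
  rcases Nat.lt_or_ge N j with h | h
  · -- both sides vanish
    rw [Finset.sum_eq_zero, Finset.sum_eq_zero]
    · intro p hp
      exact Fterm_zero_of_lt N N' a b d (by omega)
    · intro m hm
      rw [Finset.mem_range] at hm
      exact Eterm_zero_of_lt N N' a b d (by omega)
  · -- j ≤ N
    have hL : ∑ m ∈ Finset.range (N + 1), Eterm N N' a b d m j
        = ∑ m ∈ Finset.Ico j (N + 1), Eterm N N' a b d m j := by
      refine (Finset.sum_subset (Finset.Ico_subset_Ico_left (Nat.zero_le j) |>.trans
        (by rw [← Finset.range_eq_Ico])) ?_).symm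
      intro m hm hmi
      rw [Finset.mem_range] at hm
      rw [Finset.mem_Ico] at hmi
      exact Eterm_zero_of_lt N N' a b d (by omega)
    have hR : ∑ p ∈ Finset.range (N + 1), Fterm N N' a b d p j
        = ∑ p ∈ Finset.range (N + 1 - j), Fterm N N' a b d p j := by
      refine (Finset.sum_subset ?_ ?_).symm
      · exact Finset.range_subset_range.mpr (by omega)
      · intro p hp hpi
        rw [Finset.mem_range] at hp hpi
        exact Fterm_zero_of_lt N N' a b d (by omega)
    rw [hL, hR, Finset.sum_Ico_eq_sum_range]
    refine Finset.sum_congr rfl fun p hp => ?_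
    rw [Finset.mem_range] at hp
    exact Eterm_eq_Fterm N N' a b d j p (by omega)

lemma diamond (N N' : ℕ) (a b d : ℂ) :
    ∑ m ∈ Finset.range (N + 1), ∑ n ∈ Finset.range (N' + 1),
      (N.choose m : ℂ) * (N'.choose n : ℂ) * poch a m * poch b m
        * poch (d - a) n * poch (d - b) n * poch (d - a - b) (N - m)
        * poch (a + b - d) (N' - n) * poch (d + m + n) (N + N' - m - n)
    = poch (d - a) N * poch (d - b) N * poch a N' * poch b N' := by
  -- Stage A+B : rewrite inner sums into Eterm
  have stageAB : ∀ m ∈ Finset.range (N + 1),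
      ∑ n ∈ Finset.range (N' + 1),
        (N.choose m : ℂ) * (N'.choose n : ℂ) * poch a m * poch b m
          * poch (d - a) n * poch (d - b) n * poch (d - a - b) (N - m)
          * poch (a + b - d) (N' - n) * poch (d + m + n) (N + N' - m - n)
      = ∑ j ∈ Finset.range (N' + 1), Eterm N N' a b d m j := by
    intro m hm
    rw [Finset.mem_range, Nat.lt_succ_iff] at hm
    have split : ∀ n ∈ Finset.range (N' + 1),
        (N.choose m : ℂ) * (N'.choose n : ℂ) * poch a m * poch b m
          * poch (d - a) n * poch (d - b) n * poch (d - a - b) (N - m)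
          * poch (a + b - d) (N' - n) * poch (d + m + n) (N + N' - m - n)
        = ((N.choose m : ℂ) * poch a m * poch b m * poch (d - a - b) (N - m))
          * (((N'.choose n : ℂ) * poch (d - a) n * poch (d - b) n
            * poch (a + b - d) (N' - n) * poch (d + m + n) (N' - n))
            * poch (d + m + (N' : ℂ)) (N - m)) := by
      intro n hn
      rw [Finset.mem_range, Nat.lt_succ_iff] at hn
      have hsp : poch (d + m + n) (N + N' - m - n)
          = poch (d + m + n) (N' - n) * poch (d + m + (N' : ℂ)) (N - m) := by
        have hp := poch_add (d + m + (n:ℂ)) (N' - n) (N - m)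
        rw [show (N' - n) + (N - m) = N + N' - m - n from by omega] at hp
        rw [hp]
        congr 2
        rw [Nat.cast_sub hn]
        ring
      rw [hsp]
      ring
    rw [Finset.sum_congr rfl split, ← Finset.mul_sum, ← Finset.sum_mul, step1 N' m a b d]
    -- now reflect the i-sum
    rw [← Finset.sum_range_reflect (fun i => (N'.choose i : ℂ) * poch (a + m) i
      * poch (b + m) i * poch (-(m:ℂ)) (N' - i) * poch (d + m + i) (N' - i)) (N' + 1)]
    rw [Finset.sum_mul, Finset.mul_sum]
    refine Finset.sum_congr rfl fun j hj => ?_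
    rw [Finset.mem_range, Nat.lt_succ_iff] at hj
    have hidx : N' + 1 - 1 - j = N' - j := by omega
    have hidx2 : N' - (N' - j) = j := by omega
    rw [hidx, hidx2, Nat.choose_symm hj]
    have hmerge : poch (d + m + ((N' - j : ℕ) : ℂ)) (j + (N - m))
        = poch (d + m + ((N' - j : ℕ) : ℂ)) j * poch (d + m + (N' : ℂ)) (N - m) := by
      rw [poch_add]
      congr 2
      rw [Nat.cast_sub hj]
      ring
    rw [Eterm, hmerge]
    ring
  rw [Finset.sum_congr rfl stageAB, Finset.sum_comm,
    Finset.sum_congr rfl (fun j _ => claimD N N' a b d j), Finset.sum_comm]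
  -- now evaluate the inner j-sums
  have inner : ∀ p ∈ Finset.range (N + 1),
      ∑ j ∈ Finset.range (N' + 1), Fterm N N' a b d p j
      = ((N.choose p : ℂ) * poch a (N' + p) * poch b (N' + p)
          * poch (d + N' + p) (N - p)) * poch (-(N':ℂ) + (d - a - b)) (N - p) := by
    intro p hp
    rw [Finset.mem_range, Nat.lt_succ_iff] at hp
    have ext1 : ∑ j ∈ Finset.range (N' + 1), Fterm N N' a b d p j
        = ∑ j ∈ Finset.range (N + N' + 1), Fterm N N' a b d p j := by
      refine Finset.sum_subset (Finset.range_subset_range.mpr (by omega)) ?_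
      intro j hj hji
      rw [Finset.mem_range] at hj hji
      rw [Fterm, poch_neg_nat_eq_zero (show N' < j by omega)]
      ring
    have ext2 : ∑ j ∈ Finset.range ((N - p) + 1), Fterm N N' a b d p j
        = ∑ j ∈ Finset.range (N + N' + 1), Fterm N N' a b d p j := by
      refine Finset.sum_subset (Finset.range_subset_range.mpr (by omega)) ?_
      intro j hj hji
      rw [Finset.mem_range] at hj hji
      exact Fterm_zero_of_lt N N' a b d (by omega)
    rw [ext1, ← ext2]
    have hv := vander (N - p) (-(N':ℂ)) (d - a - b)
    rw [hv, Finset.mul_sum]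
    refine Finset.sum_congr rfl fun j hj => ?_
    rw [Fterm]
    ring
  rw [Finset.sum_congr rfl inner]
  -- final Saalschütz
  have final : ∀ p ∈ Finset.range (N + 1),
      ((N.choose p : ℂ) * poch a (N' + p) * poch b (N' + p)
          * poch (d + N' + p) (N - p)) * poch (-(N':ℂ) + (d - a - b)) (N - p)
      = (poch a N' * poch b N') * ((N.choose p : ℂ) * poch (a + (N':ℂ)) p
          * poch (b + (N':ℂ)) p
          * poch ((d + (N':ℂ)) - (a + (N':ℂ)) - (b + (N':ℂ))) (N - p)
          * poch ((d + (N':ℂ)) + p) (N - p)) := by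
    intro p hp
    rw [poch_add a N' p, poch_add b N' p,
      show -(N':ℂ) + (d - a - b) = (d + (N':ℂ)) - (a + (N':ℂ)) - (b + (N':ℂ)) from by ring,
      show d + (N':ℂ) + p = (d + (N':ℂ)) + p from by ring]
    ring
  rw [Finset.sum_congr rfl final, ← Finset.mul_sum, saal N (a + (N':ℂ)) (b + (N':ℂ)) (d + (N':ℂ)),
    show (d + (N':ℂ)) - (a + (N':ℂ)) = d - a from by ring,
    show (d + (N':ℂ)) - (b + (N':ℂ)) = d - b from by ring]
  ring

lemma poch_reflect (z : ℂ) (m : ℕ) : poch (1 - z - m) m = (-1)^m * poch z m := by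
  induction m with
  | zero => simp [poch_zero]
  | succ m ih =>
    rw [poch_succ' (1 - z - ((m+1 : ℕ) : ℂ)) m]
    have e1 : 1 - z - ((m+1 : ℕ) : ℂ) + 1 = 1 - z - m := by push_cast; ring
    rw [e1, ih, poch_succ z m]
    push_cast
    ring

lemma poch_factor_ne_zero {x : ℂ} {K : ℕ} (h : poch x K ≠ 0) {k : ℕ} (hk : k ≤ K) :
    poch x k ≠ 0 ∧ poch (x + k) (K - k) ≠ 0 := by
  have hp := poch_add x k (K - k)
  rw [show k + (K - k) = K from by omega] at hp
  rw [hp] at h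
  exact ⟨left_ne_zero_of_mul h, right_ne_zero_of_mul h⟩

theorem kdf_summation_fi1 (N N' : ℕ) (hN : 0 < N) (hN' : 0 < N') (a b d : ℂ)
    (hd : poch d (N + N') ≠ 0)
    (he : poch (1 + a + b - N - d) N ≠ 0)
    (he' : poch (1 - a - b - N' + d) N' ≠ 0) :
    (∑ m ∈ Finset.range (N + 1), ∑ n ∈ Finset.range (N' + 1),
        poch a m * poch b m * poch (-(N : ℂ)) m *
            poch (d - a) n * poch (d - b) n * poch (-(N' : ℂ)) n /
          (poch d (m + n) * poch (1 + a + b - N - d) m * poch (1 - a - b - N' + d) n *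
            (Nat.factorial m : ℂ) * (Nat.factorial n : ℂ))) =
      poch (d - a) N * poch (d - b) N * poch a N' * poch b N' /
        (poch d (N + N') * poch (d - a - b) N * poch (a + b - d) N') := by
  -- reflections for the full parameters
  have hrefl1 : poch (1 + a + b - N - d) N = (-1)^N * poch (d - a - b) N := by
    rw [show (1 + a + b - (N:ℂ) - d) = 1 - (d - a - b) - (N:ℂ) from by ring]
    exact poch_reflect (d - a - b) N
  have hrefl2 : poch (1 - a - b - N' + d) N' = (-1)^(N') * poch (a + b - d) N' := by
    rw [show (1 - a - b - (N':ℂ) + d) = 1 - (a + b - d) - (N':ℂ) from by ring]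
    exact poch_reflect (a + b - d) N'
  have hdab : poch (d - a - b) N ≠ 0 := by
    rw [hrefl1] at he
    exact right_ne_zero_of_mul he
  have habd : poch (a + b - d) N' ≠ 0 := by
    rw [hrefl2] at he'
    exact right_ne_zero_of_mul he'
  have hD2 : poch d (N + N') * poch (d - a - b) N * poch (a + b - d) N' ≠ 0 :=
    mul_ne_zero (mul_ne_zero hd hdab) habd
  -- termwise equality
  have term : ∀ m ∈ Finset.range (N + 1), ∀ n ∈ Finset.range (N' + 1),
      poch a m * poch b m * poch (-(N : ℂ)) m *
          poch (d - a) n * poch (d - b) n * poch (-(N' : ℂ)) n /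
        (poch d (m + n) * poch (1 + a + b - N - d) m * poch (1 - a - b - N' + d) n *
          (Nat.factorial m : ℂ) * (Nat.factorial n : ℂ))
      = ((N.choose m : ℂ) * (N'.choose n : ℂ) * poch a m * poch b m
          * poch (d - a) n * poch (d - b) n * poch (d - a - b) (N - m)
          * poch (a + b - d) (N' - n) * poch (d + m + n) (N + N' - m - n))
        / (poch d (N + N') * poch (d - a - b) N * poch (a + b - d) N') := by
    intro m hm n hn
    rw [Finset.mem_range, Nat.lt_succ_iff] at hm hn
    -- nonvanishing of the term denominator
    have hdmn : poch d (m + n) ≠ 0 := (poch_factor_ne_zero hd (by omega)).1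
    have hem : poch (1 + a + b - N - d) m ≠ 0 := (poch_factor_ne_zero he hm).1
    have hen : poch (1 - a - b - N' + d) n ≠ 0 := (poch_factor_ne_zero he' hn).1
    have hden : poch d (m + n) * poch (1 + a + b - N - d) m * poch (1 - a - b - N' + d) n *
        (Nat.factorial m : ℂ) * (Nat.factorial n : ℂ) ≠ 0 := by
      refine mul_ne_zero (mul_ne_zero (mul_ne_zero (mul_ne_zero hdmn hem) hen) ?_) ?_ <;>
        exact_mod_cast Nat.cast_ne_zero.mpr (Nat.factorial_ne_zero _)
    rw [div_eq_div_iff hden hD2]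
    -- rewrite all ingredients
    have hsplit_d : poch d (N + N') = poch d (m + n) * poch (d + m + n) (N + N' - m - n) := by
      have hp := poch_add d (m + n) (N + N' - m - n)
      rw [show (m + n) + (N + N' - m - n) = N + N' from by omega] at hp
      rw [hp]
      congr 2
      push_cast; ring
    have hsplit_ab : poch (d - a - b) N
        = poch (d - a - b) (N - m) * poch ((d - a - b) + ((N - m : ℕ):ℂ)) m := by
      have hp := poch_add (d - a - b) (N - m) m
      rw [show (N - m) + m = N from by omega] at hp
      rw [hp]
    have hsplit_ba : poch (a + b - d) N'
        = poch (a + b - d) (N' - n) * poch ((a + b - d) + ((N' - n : ℕ):ℂ)) n := by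
      have hp := poch_add (a + b - d) (N' - n) n
      rw [show (N' - n) + n = N' from by omega] at hp
      rw [hp]
    have hreflm : poch (1 + a + b - N - d) m
        = (-1)^m * poch ((d - a - b) + ((N - m : ℕ):ℂ)) m := by
      rw [show (1 + a + b - (N:ℂ) - d) = 1 - ((d - a - b) + ((N - m : ℕ):ℂ)) - (m:ℂ) from by
        rw [Nat.cast_sub hm]; ring]
      exact poch_reflect _ m
    have hrefln : poch (1 - a - b - N' + d) n
        = (-1)^n * poch ((a + b - d) + ((N' - n : ℕ):ℂ)) n := by
      rw [show (1 - a - b - (N':ℂ) + d) = 1 - ((a + b - d) + ((N' - n : ℕ):ℂ)) - (n:ℂ) from by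
        rw [Nat.cast_sub hn]; ring]
      exact poch_reflect _ n
    have hfm : poch (-(N : ℂ)) m = (-1)^m * ((Nat.factorial m : ℂ) * (N.choose m : ℂ)) := by
      rw [poch_neg_nat hm, Nat.descFactorial_eq_factorial_mul_choose]
      push_cast; ring
    have hfn : poch (-(N' : ℂ)) n = (-1)^n * ((Nat.factorial n : ℂ) * (N'.choose n : ℂ)) := by
      rw [poch_neg_nat hn, Nat.descFactorial_eq_factorial_mul_choose]
      push_cast; ring
    rw [hsplit_d, hsplit_ab, hsplit_ba, hreflm, hrefln, hfm, hfn]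
    ring
  calc
    (∑ m ∈ Finset.range (N + 1), ∑ n ∈ Finset.range (N' + 1),
        poch a m * poch b m * poch (-(N : ℂ)) m *
            poch (d - a) n * poch (d - b) n * poch (-(N' : ℂ)) n /
          (poch d (m + n) * poch (1 + a + b - N - d) m * poch (1 - a - b - N' + d) n *
            (Nat.factorial m : ℂ) * (Nat.factorial n : ℂ)))
      = ∑ m ∈ Finset.range (N + 1), ∑ n ∈ Finset.range (N' + 1),
          ((N.choose m : ℂ) * (N'.choose n : ℂ) * poch a m * poch b m
            * poch (d - a) n * poch (d - b) n * poch (d - a - b) (N - m)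
            * poch (a + b - d) (N' - n) * poch (d + m + n) (N + N' - m - n))
          / (poch d (N + N') * poch (d - a - b) N * poch (a + b - d) N') := by
        refine Finset.sum_congr rfl fun m hm => Finset.sum_congr rfl fun n hn => ?_
        exact term m hm n hn
    _ = (∑ m ∈ Finset.range (N + 1), ∑ n ∈ Finset.range (N' + 1),
          (N.choose m : ℂ) * (N'.choose n : ℂ) * poch a m * poch b m
            * poch (d - a) n * poch (d - b) n * poch (d - a - b) (N - m)
            * poch (a + b - d) (N' - n) * poch (d + m + n) (N + N' - m - n))
          / (poch d (N + N') * poch (d - a - b) N * poch (a + b - d) N') := by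
        rw [Finset.sum_div]
        refine Finset.sum_congr rfl fun m hm => ?_
        rw [Finset.sum_div]
    _ = poch (d - a) N * poch (d - b) N * poch a N' * poch b N' /
        (poch d (N + N') * poch (d - a - b) N * poch (a + b - d) N') := by
        rw [diamond N N' a b d]
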